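/- arXiv:1112.4352 — 6 statements merged into one kernel-verified Lean document; each statement's English description precedes it below -/
import Mathlib

section
/- For all real x with 0 ≤ x < (π/2)^2, the derivative of the function x ↦ x · cot²(√x) satisfies -1 ≤ (x cot²√x)' ≤ 0. -/
/-!
With `t = √x`, the slope of `xCotSq` at `0` is `(t² cot² t - 1) / t²`, and
`t² cot² t - 1 = (t cos t - sin t)(t cos t + sin t) / sin² t`; l'Hôpital gives
`(t cos t - sin t) / t³ → -1/3`, so the right derivative at `0` is `-2/3`.
For `x > 0` the chain rule gives the derivative `cos t (sin t cos t - t) / sin³ t`,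
which lies in `[-1, 0]` on `(0, π/2)` because `sin 2t < 2t` and `t < tan t`.
-/

open Real

noncomputable def xCotSq (x : ℝ) : ℝ :=
  if x = 0 then 1 else x * (Real.cos (Real.sqrt x) / Real.sin (Real.sqrt x)) ^ 2

open Filter Set Topology

lemma tendsto_sin_div_self : Tendsto (fun t => sin t / t) (𝓝[≠] 0) (𝓝 1) := by
  have h : Tendsto sinc (𝓝[≠] 0) (𝓝 1) := by
    simpa using continuous_sinc.continuousAt.tendsto.mono_left (nhdsWithin_le_nhds (a := (0:ℝ)))
  exact h.congr' (eventually_nhdsWithin_of_forall fun t ht => sinc_of_ne_zero ht)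

lemma tendsto_mul_cos_sub_sin_div_pow_three :
    Tendsto (fun t => (t * cos t - sin t) / t ^ 3) (𝓝[≠] 0) (𝓝 (-1 / 3)) := by
  refine HasDerivAt.lhopital_zero_nhdsNE (f' := fun t => -t * sin t) (g' := fun t => 3 * t ^ 2)
    (.of_forall fun t => ?_) (.of_forall fun t => by simpa using hasDerivAt_pow 3 t)
    (eventually_nhdsWithin_of_forall fun t ht => by simpa using ht) ?_ ?_ ?_
  · have h : HasDerivAt (fun t => t * cos t - sin t) (1 * cos t + t * -sin t - cos t) t :=
      ((hasDerivAt_id' t).mul (hasDerivAt_cos t)).sub (hasDerivAt_sin t)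
    convert h using 1
    ring
  · simpa using (by fun_prop : Continuous fun t : ℝ => t * cos t - sin t).continuousWithinAt
      (s := {0}ᶜ) (x := 0) |>.tendsto
  · simpa using (continuous_pow 3).continuousWithinAt (s := {(0:ℝ)}ᶜ) (x := 0) |>.tendsto
  · refine ((tendsto_sin_div_self.neg).div_const 3).congr' ?_
    filter_upwards [self_mem_nhdsWithin] with t (ht : t ≠ 0)
    field_simp

lemma tendsto_sq_mul_cot_sq_sub_one_div_sq :
    Tendsto (fun t => (t ^ 2 * (cos t / sin t) ^ 2 - 1) / t ^ 2) (𝓝[≠] 0) (𝓝 (-2 / 3)) := by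
  have hcos : Tendsto cos (𝓝[≠] 0) (𝓝 1) := by
    simpa using continuous_cos.continuousWithinAt (s := {(0:ℝ)}ᶜ) (x := 0) |>.tendsto
  have hlim := (tendsto_mul_cos_sub_sin_div_pow_three.mul
    ((tendsto_sin_div_self.inv₀ one_ne_zero).pow 2)).mul (hcos.add tendsto_sin_div_self)
  rw [show (-1 / 3 * 1⁻¹ ^ 2 * (1 + 1) : ℝ) = -2 / 3 by norm_num] at hlim
  refine hlim.congr' ?_
  filter_upwards [self_mem_nhdsWithin, tendsto_sin_div_self.eventually_ne one_ne_zero]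
    with t (ht : t ≠ 0) hs
  have hs : sin t ≠ 0 := by simpa [ht] using hs
  field_simp
  ring

lemma slope_xCotSq_zero {x : ℝ} (hx : 0 < x) :
    slope xCotSq 0 x = (√x ^ 2 * (cos √x / sin √x) ^ 2 - 1) / √x ^ 2 := by
  rw [sq_sqrt hx.le, slope_def_field, xCotSq, xCotSq, if_neg hx.ne', if_pos rfl, sub_zero]

lemma tendsto_sqrt_nhdsGT_zero : Tendsto sqrt (𝓝[>] 0) (𝓝[≠] 0) :=
  tendsto_nhdsWithin_iff.2 ⟨(continuous_sqrt.tendsto' 0 0 sqrt_zero).mono_left nhdsWithin_le_nhds,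
    eventually_nhdsWithin_of_forall fun _ hx => (sqrt_pos.2 hx).ne'⟩

lemma hasDerivWithinAt_xCotSq_zero : HasDerivWithinAt xCotSq (-2 / 3) (Ici 0) 0 := by
  rw [hasDerivWithinAt_iff_tendsto_slope, Ici_sdiff_left]
  exact (tendsto_sq_mul_cot_sq_sub_one_div_sq.comp tendsto_sqrt_nhdsGT_zero).congr'
    (eventually_nhdsWithin_of_forall fun x hx => (slope_xCotSq_zero hx).symm)

lemma hasDerivAt_cos_div_sin {t : ℝ} (ht : sin t ≠ 0) :
    HasDerivAt (fun u => cos u / sin u) (-1 / sin t ^ 2) t := by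
  refine ((hasDerivAt_cos t).div (hasDerivAt_sin t) ht).congr_deriv ?_
  congr 1
  linear_combination -sin_sq_add_cos_sq t

lemma hasDerivAt_xCotSq {x : ℝ} (hx : 0 < x) (hs : sin √x ≠ 0) :
    HasDerivAt xCotSq (cos √x * (sin √x * cos √x - √x) / sin √x ^ 3) x := by
  have h : HasDerivAt (fun y => y * (cos √y / sin √y) ^ 2) (1 * (cos √x / sin √x) ^ 2 +
      x * (2 * (cos √x / sin √x) ^ 1 * (-1 / sin √x ^ 2 * (1 / (2 * √x))))) x :=
    (hasDerivAt_id' x).mul (((hasDerivAt_cos_div_sin hs).comp x (hasDerivAt_sqrt hx.ne')).pow 2)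
  refine (h.congr_of_eventuallyEq ?_).congr_deriv ?_
  · filter_upwards [eventually_ne_nhds hx.ne'] with y hy
    rw [xCotSq, if_neg hy]
  · have hx' : x = √x ^ 2 := (sq_sqrt hx.le).symm
    have ht : √x ≠ 0 := (sqrt_pos.2 hx).ne'
    set t := √x
    rw [hx']
    field_simp
    ring

lemma neg_one_le_cos_mul_sin_mul_cos_sub_div {t : ℝ} (ht : 0 < t) (ht' : t < π / 2) :
    -1 ≤ cos t * (sin t * cos t - t) / sin t ^ 3 := by
  have hsin : 0 < sin t := sin_pos_of_pos_of_lt_pi ht (by linarith [pi_pos])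
  have hcos : 0 < cos t := cos_pos_of_mem_Ioo ⟨by linarith, ht'⟩
  have htan : t * cos t < sin t := by
    rw [← lt_div_iff₀ hcos, ← tan_eq_sin_div_cos]; exact lt_tan ht ht'
  -- after clearing `sin³ t`, this is `t cos t ≤ sin t (sin² t + cos² t)`
  rw [le_div_iff₀ (by positivity)]
  nlinarith [sin_sq_add_cos_sq t]

lemma cos_mul_sin_mul_cos_sub_div_nonpos {t : ℝ} (ht : 0 < t) (ht' : t < π / 2) :
    cos t * (sin t * cos t - t) / sin t ^ 3 ≤ 0 := by
  have hsin : 0 < sin t := sin_pos_of_pos_of_lt_pi ht (by linarith [pi_pos])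
  have hcos : 0 < cos t := cos_pos_of_mem_Ioo ⟨by linarith, ht'⟩
  have hsin2 : sin t * cos t < t := by
    have := sin_lt (mul_pos two_pos ht)
    rw [sin_two_mul] at this
    linarith
  exact div_nonpos_of_nonpos_of_nonneg (mul_nonpos_of_nonneg_of_nonpos hcos.le (by linarith))
    (by positivity)

theorem deriv_x_cot_sq_sqrt_bounds :
    ∀ x : ℝ, 0 ≤ x → x < (Real.pi / 2) ^ 2 →
      ∃ d : ℝ, HasDerivWithinAt xCotSq d (Set.Ici 0) x ∧ -1 ≤ d ∧ d ≤ 0 := by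
  intro x hx0 hxlt
  rcases hx0.eq_or_lt with rfl | hx
  · exact ⟨-2 / 3, hasDerivWithinAt_xCotSq_zero, by norm_num, by norm_num⟩
  have ht : 0 < √x := sqrt_pos.2 hx
  have ht' : √x < π / 2 := (sqrt_lt' (by positivity)).2 hxlt
  have hs : sin √x ≠ 0 := (sin_pos_of_pos_of_lt_pi ht (by linarith [pi_pos])).ne'
  exact ⟨_, (hasDerivAt_xCotSq hx hs).hasDerivWithinAt,
    neg_one_le_cos_mul_sin_mul_cos_sub_div ht ht', cos_mul_sin_mul_cos_sub_div_nonpos ht ht'⟩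
end

section
/- For all real x ≥ 0, the derivative of the function x ↦ x · coth²(√x) satisfies 0 ≤ (x coth²√x)' ≤ 1. -/
open Real

noncomputable def xCothSq (x : ℝ) : ℝ :=
  if x = 0 then 1 else x * (Real.cosh (Real.sqrt x) / Real.sinh (Real.sqrt x)) ^ 2

/-!
Writing `t = √x`, the derivative of `x coth² √x` at `x > 0` is
`1 - (t cosh t - sinh t) / sinh³ t`. The elementary inequalities `sinh t ≤ t cosh t`
(i.e. `tanh t ≤ t`) and `t ≤ sinh t cosh t` (i.e. `2t ≤ sinh 2t`) give
`0 ≤ t cosh t - sinh t ≤ sinh³ t`, hence the bounds. At `x = 0` the derivative extends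
continuously: `(t cosh t - sinh t) / t³ → 1/3` by l'Hôpital's rule, so the one-sided
derivative there is `2/3`.
-/

open Filter Topology Set

namespace Real

theorem hasDerivAt_mul_cosh_sub_sinh (t : ℝ) :
    HasDerivAt (fun u => u * cosh u - sinh u) (t * sinh t) t :=
  (((hasDerivAt_id' t).mul (hasDerivAt_cosh t)).sub (hasDerivAt_sinh t)).congr_deriv (by ring)

theorem sinh_le_mul_cosh {t : ℝ} (ht : 0 ≤ t) : sinh t ≤ t * cosh t := by
  have hmono : MonotoneOn (fun u => u * cosh u - sinh u) (Ici 0) :=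
    monotoneOn_of_hasDerivWithinAt_nonneg (convex_Ici 0)
      (fun u _ => (hasDerivAt_mul_cosh_sub_sinh u).continuousAt.continuousWithinAt)
      (fun u _ => (hasDerivAt_mul_cosh_sub_sinh u).hasDerivWithinAt)
      (fun u hu => by
        rw [interior_Ici] at hu
        exact mul_nonneg hu.le (sinh_nonneg_iff.mpr hu.le))
  simpa using hmono self_mem_Ici ht ht

theorem self_le_sinh_mul_cosh {t : ℝ} (ht : 0 ≤ t) : t ≤ sinh t * cosh t := by
  have h := self_le_sinh_iff.mpr (mul_nonneg zero_le_two ht)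
  rw [sinh_two_mul] at h
  linarith

theorem tendsto_sinh_div_self : Tendsto (fun t => sinh t / t) (𝓝[≠] 0) (𝓝 1) :=
  (Asymptotics.isEquivalent_iff_tendsto_one eventually_mem_nhdsWithin).mp
    (isEquivalent_sinh.mono nhdsWithin_le_nhds)

theorem mul_cosh_sub_sinh_le_sinh_pow_three {t : ℝ} (ht : 0 ≤ t) :
    t * cosh t - sinh t ≤ sinh t ^ 3 := by
  have h := mul_le_mul_of_nonneg_right (self_le_sinh_mul_cosh ht) (cosh_pos t).le
  have hc : sinh t * cosh t * cosh t = sinh t ^ 3 + sinh t := by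
    rw [mul_assoc, ← sq, cosh_sq]
    ring
  linarith

theorem tendsto_mul_cosh_sub_sinh_div_pow_three :
    Tendsto (fun t => (t * cosh t - sinh t) / t ^ 3) (𝓝[>] 0) (𝓝 (1 / 3)) := by
  refine HasDerivAt.lhopital_zero_nhdsGT (f' := fun t => t * sinh t) (g' := fun t => 3 * t ^ 2)
    (.of_forall hasDerivAt_mul_cosh_sub_sinh)
    (.of_forall fun t => by simpa using hasDerivAt_pow 3 t)
    (eventually_mem_nhdsWithin.mono fun t (ht : 0 < t) => by positivity)
    ((((continuous_id.mul continuous_cosh).sub continuous_sinh).tendsto' 0 0 (by simp)).mono_left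
      nhdsWithin_le_nhds)
    (((continuous_pow 3).tendsto' 0 0 (by simp)).mono_left nhdsWithin_le_nhds) ?_
  refine ((tendsto_sinh_div_self.mono_left (nhdsGT_le_nhdsNE 0)).div_const 3).congr' ?_
  filter_upwards [self_mem_nhdsWithin] with t (ht : 0 < t)
  field_simp

theorem tendsto_sqrt_nhdsGT_zero : Tendsto sqrt (𝓝[>] 0) (𝓝[>] 0) :=
  tendsto_nhdsWithin_iff.mpr
    ⟨(continuous_sqrt.tendsto' 0 0 sqrt_zero).mono_left nhdsWithin_le_nhds,
      eventually_mem_nhdsWithin.mono fun _ hx => sqrt_pos.mpr hx⟩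

end Real

noncomputable def xCothSqDeriv (x : ℝ) : ℝ :=
  1 - (√x * cosh √x - sinh √x) / sinh √x ^ 3

theorem xCothSq_of_ne_zero {x : ℝ} (hx : x ≠ 0) : xCothSq x = x * (cosh √x / sinh √x) ^ 2 :=
  if_neg hx

theorem hasDerivAt_xCothSq {x : ℝ} (hx : 0 < x) : HasDerivAt xCothSq (xCothSqDeriv x) x := by
  have ht : 0 < √x := sqrt_pos.mpr hx
  have hs : 0 < sinh √x := sinh_pos_iff.mpr ht
  have hsqrt := hasDerivAt_sqrt hx.ne'
  have hcoth := ((hasDerivAt_cosh √x).comp x hsqrt).div ((hasDerivAt_sinh √x).comp x hsqrt) hs.ne'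
  refine (((hasDerivAt_id' x).mul (hcoth.pow 2)).congr_of_eventuallyEq ?_).congr_deriv ?_
  · filter_upwards [eventually_ne_nhds hx.ne'] with y hy
    exact xCothSq_of_ne_zero hy
  · have hx' : x = √x ^ 2 := (sq_sqrt hx.le).symm
    simp only [Function.comp_apply, Pi.div_apply, Pi.pow_apply, xCothSqDeriv]
    set t := √x
    rw [hx']
    norm_num
    field_simp
    linear_combination (sinh t - t * cosh t) * cosh_sq t

theorem xCothSqDeriv_mem_Icc (x : ℝ) : xCothSqDeriv x ∈ Icc 0 1 := by
  have ht := sqrt_nonneg x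
  have hs : 0 ≤ sinh √x ^ 3 := pow_nonneg (sinh_nonneg_iff.mpr ht) 3
  exact ⟨sub_nonneg.mpr (div_le_one_of_le₀ (mul_cosh_sub_sinh_le_sinh_pow_three ht) hs),
    sub_le_self _ (div_nonneg (sub_nonneg.mpr (sinh_le_mul_cosh ht)) hs)⟩

theorem tendsto_xCothSq_nhdsGT_zero : Tendsto xCothSq (𝓝[>] 0) (𝓝 1) := by
  have hlim : Tendsto (fun t => (cosh t / (sinh t / t)) ^ 2) (𝓝[>] 0) (𝓝 1) := by
    simpa using ((continuous_cosh.tendsto' 0 1 cosh_zero).mono_left nhdsWithin_le_nhds).div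
      (tendsto_sinh_div_self.mono_left (nhdsGT_le_nhdsNE 0)) one_ne_zero |>.pow 2
  refine (hlim.comp tendsto_sqrt_nhdsGT_zero).congr' ?_
  filter_upwards [self_mem_nhdsWithin] with x (hx : 0 < x)
  obtain ⟨t, ht, rfl⟩ : ∃ t, 0 < t ∧ x = t ^ 2 := ⟨√x, sqrt_pos.2 hx, (sq_sqrt hx.le).symm⟩
  rw [Function.comp_apply, xCothSq_of_ne_zero hx.ne', sqrt_sq ht.le]
  field_simp

theorem tendsto_xCothSqDeriv_nhdsGT_zero : Tendsto xCothSqDeriv (𝓝[>] 0) (𝓝 (2 / 3)) := by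
  have hlim := (tendsto_mul_cosh_sub_sinh_div_pow_three.div
    ((tendsto_sinh_div_self.mono_left (nhdsGT_le_nhdsNE 0)).pow 3) (by norm_num)).const_sub 1
  rw [show (1 : ℝ) - 1 / 3 / 1 ^ 3 = 2 / 3 by norm_num] at hlim
  refine (hlim.comp tendsto_sqrt_nhdsGT_zero).congr' ?_
  filter_upwards [self_mem_nhdsWithin] with x (hx : 0 < x)
  have ht : √x ≠ 0 := (sqrt_pos.mpr hx).ne'
  simp only [Function.comp_apply, Pi.div_apply, xCothSqDeriv]
  field_simp

theorem hasDerivWithinAt_xCothSq_zero : HasDerivWithinAt xCothSq (2 / 3) (Ici 0) 0 := by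
  refine hasDerivWithinAt_Ici_of_tendsto_deriv (s := Ioi 0)
    (fun x hx => (hasDerivAt_xCothSq hx).differentiableAt.differentiableWithinAt) ?_
    self_mem_nhdsWithin ?_
  · simpa [ContinuousWithinAt, xCothSq] using tendsto_xCothSq_nhdsGT_zero
  · refine tendsto_xCothSqDeriv_nhdsGT_zero.congr' ?_
    filter_upwards [self_mem_nhdsWithin] with x hx
    exact (hasDerivAt_xCothSq hx).deriv.symm

theorem deriv_x_coth_sq_sqrt_bounds :
    ∀ x : ℝ, 0 ≤ x →
      ∃ d : ℝ, HasDerivWithinAt xCothSq d (Set.Ici 0) x ∧ 0 ≤ d ∧ d ≤ 1 := by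
  intro x hx
  rcases hx.eq_or_lt with rfl | hx
  · exact ⟨2 / 3, hasDerivWithinAt_xCothSq_zero, by norm_num, by norm_num⟩
  · exact ⟨xCothSqDeriv x, (hasDerivAt_xCothSq hx).hasDerivWithinAt, xCothSqDeriv_mem_Icc x⟩
end

section
/- For all real y ≥ 0, 3y + 2y·sinh²(y) ≥ 3·cosh(y)·sinh(y). -/
/-!
Let `f y = 3 y + 2 y sinh² y - 3 cosh y sinh y`. Then `f 0 = 0` and, using `cosh² = 1 + sinh²`,
`f' y = 4 sinh y (y cosh y - sinh y)`, which is nonnegative for `y ≥ 0` because `sinh y ≤ y cosh y`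
there (the difference vanishes at `0` and has derivative `y sinh y ≥ 0`). Hence `f` is nonnegative
on `[0, ∞)`.
-/

open Real Set

lemma le_of_hasDerivAt_nonneg_of_le {f f' : ℝ → ℝ} {a x : ℝ} (hf : ∀ t, HasDerivAt f (f' t) t)
    (hf' : ∀ t, a < t → 0 ≤ f' t) (hax : a ≤ x) : f a ≤ f x := by
  have hmono : MonotoneOn f (Ici a) := by
    refine monotoneOn_of_hasDerivWithinAt_nonneg (convex_Ici a)
      (fun t _ ↦ (hf t).continuousAt.continuousWithinAt) (fun t _ ↦ (hf t).hasDerivWithinAt) ?_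
    rw [interior_Ici]
    exact hf'
  exact hmono self_mem_Ici hax hax

lemma Real.sinh_le_mul_cosh_s4 {x : ℝ} (hx : 0 ≤ x) : sinh x ≤ x * cosh x := by
  have hderiv (t : ℝ) : HasDerivAt (fun t ↦ t * cosh t - sinh t) (t * sinh t) t :=
    (((hasDerivAt_id' t).mul (hasDerivAt_cosh t)).sub (hasDerivAt_sinh t)).congr_deriv (by ring)
  have := le_of_hasDerivAt_nonneg_of_le hderiv
    (fun t ht ↦ mul_nonneg ht.le (sinh_nonneg_iff.2 ht.le)) hx
  simp only [zero_mul, sinh_zero, sub_zero] at this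
  linarith

lemma hasDerivAt_sinh_cosh_ineq_gap (y : ℝ) :
    HasDerivAt (fun y ↦ 3 * y + 2 * y * sinh y ^ 2 - 3 * cosh y * sinh y)
      (4 * sinh y * (y * cosh y - sinh y)) y :=
  ((((hasDerivAt_id' y).const_mul 3).add
    (((hasDerivAt_id' y).const_mul 2).mul ((hasDerivAt_sinh y).fun_pow 2))).sub
    (((hasDerivAt_cosh y).const_mul 3).mul (hasDerivAt_sinh y))).congr_deriv
    (by linear_combination (-3 : ℝ) * cosh_sq' y)

theorem sinh_cosh_ineq (y : ℝ) (hy : 0 ≤ y) :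
    3 * y + 2 * y * Real.sinh y ^ 2 ≥ 3 * Real.cosh y * Real.sinh y := by
  have := le_of_hasDerivAt_nonneg_of_le hasDerivAt_sinh_cosh_ineq_gap
    (fun t ht ↦ mul_nonneg (mul_nonneg zero_le_four (sinh_nonneg_iff.2 ht.le))
      (sub_nonneg.2 (sinh_le_mul_cosh_s4 ht.le))) hy
  simp only [mul_zero, zero_mul, sinh_zero, add_zero, sub_zero] at this
  linarith
end

section
/- Let κ ≤ K be real numbers and define cot_K r = (sin_K r)'/(sin_K r), where sin_K r = sin(r√K)/√K for K > 0, sin_0 r = r, and sin_K r = sinh(r√(-K))/√(-K) for K < 0. Then for all r in (0, π/(2√(K⁺))) (with π/(2√(K⁺)) = ∞ if K ≤ 0), one has (cot_K r)² - (cot_κ r)² ≥ -(K - κ). -/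
noncomputable def sinK (K r : ℝ) : ℝ :=
  if 0 < K then Real.sin (r * Real.sqrt K) / Real.sqrt K
  else if K < 0 then Real.sinh (r * Real.sqrt (-K)) / Real.sqrt (-K)
  else r

noncomputable def cotK (K r : ℝ) : ℝ := deriv (sinK K) r / sinK K r

/-! Since `(sin_K')² + K sin_K² = 1`, we have `cot_K² + K = 1 / sin_K²`, so the inequality
says that `sin_K r ≤ sin_κ r`: the generalized sine decreases in the curvature. Writing
`sin_K r = r · (sin x / x)` with `x = r√K` (and `sinh` for `K < 0`), this is the monotonicity of
the secant slopes through `0` of `sin`, concave on `[0, π]`, and of `sinh`, convex on `[0, ∞)`;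
across `K = 0` it is `sin x ≤ x ≤ sinh x`. -/

open Real Set

theorem Real.convexOn_sinh_Ici : ConvexOn ℝ (Ici 0) sinh := by
  refine MonotoneOn.convexOn_of_deriv (convex_Ici 0) continuous_sinh.continuousOn
    differentiable_sinh.differentiableOn ?_
  rw [interior_Ici, Real.deriv_sinh]
  intro x hx y hy hxy
  rw [cosh_le_cosh, abs_of_pos hx, abs_of_pos hy]
  exact hxy

theorem Real.sin_div_le_sin_div_of_le {x y : ℝ} (hx : 0 < x) (hxy : x ≤ y) (hy : y ≤ π) :
    sin y / y ≤ sin x / x := by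
  have hsec := strictConcaveOn_sin_Icc.concaveOn.neg.secant_mono
    (left_mem_Icc.2 pi_pos.le) ⟨hx.le, hxy.trans hy⟩ ⟨hx.le.trans hxy, hy⟩
    hx.ne' (hx.trans_le hxy).ne' hxy
  simp only [Pi.neg_apply, sin_zero, neg_zero, sub_zero, neg_div] at hsec
  linarith

theorem Real.sinh_div_le_sinh_div_of_le {x y : ℝ} (hx : 0 < x) (hxy : x ≤ y) :
    sinh x / x ≤ sinh y / y := by
  have hsec := convexOn_sinh_Ici.secant_mono self_mem_Ici (mem_Ici.2 hx.le)
    (mem_Ici.2 (hx.le.trans hxy)) hx.ne' (hx.trans_le hxy).ne' hxy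
  simpa only [sinh_zero, sub_zero] using hsec

noncomputable def cosK (K r : ℝ) : ℝ :=
  if 0 < K then cos (r * √K)
  else if K < 0 then cosh (r * √(-K))
  else 1

theorem sinK_of_pos {K : ℝ} (hK : 0 < K) (r : ℝ) : sinK K r = sin (r * √K) / √K :=
  if_pos hK

theorem sinK_of_neg {K : ℝ} (hK : K < 0) (r : ℝ) : sinK K r = sinh (r * √(-K)) / √(-K) := by
  rw [sinK, if_neg hK.not_gt, if_pos hK]

theorem sinK_zero (r : ℝ) : sinK 0 r = r := by
  simp [sinK]

theorem hasDerivAt_sinK (K r : ℝ) : HasDerivAt (sinK K) (cosK K r) r := by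
  rcases lt_trichotomy K 0 with hK | rfl | hK
  · have hs : √(-K) ≠ 0 := (sqrt_pos.2 (neg_pos.2 hK)).ne'
    rw [funext (sinK_of_neg hK), cosK, if_neg hK.not_gt, if_pos hK]
    exact ((hasDerivAt_mul_const √(-K)).sinh.div_const √(-K)).congr_deriv (by field_simp)
  · simpa [funext sinK_zero, cosK] using hasDerivAt_id' r
  · have hs : √K ≠ 0 := (sqrt_pos.2 hK).ne'
    rw [funext (sinK_of_pos hK), cosK, if_pos hK]
    exact ((hasDerivAt_mul_const √K).sin.div_const √K).congr_deriv (by field_simp)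

theorem cosK_sq_add_mul_sinK_sq (K r : ℝ) : cosK K r ^ 2 + K * sinK K r ^ 2 = 1 := by
  rcases lt_trichotomy K 0 with hK | rfl | hK
  · rw [sinK_of_neg hK, cosK, if_neg hK.not_gt, if_pos hK, div_pow, sq_sqrt (neg_pos.2 hK).le]
    field_simp [hK.ne]
    linear_combination cosh_sq_sub_sinh_sq (r * √(-K))
  · simp [cosK]
  · rw [sinK_of_pos hK, cosK, if_pos hK, div_pow, sq_sqrt hK.le]
    field_simp
    linear_combination sin_sq_add_cos_sq (r * √K)

theorem cotK_sq_add {K r : ℝ} (hs : sinK K r ≠ 0) : cotK K r ^ 2 + K = (sinK K r ^ 2)⁻¹ := by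
  rw [cotK, (hasDerivAt_sinK K r).deriv]
  field_simp
  linear_combination cosK_sq_add_mul_sinK_sq K r

theorem sinK_le_self {K r : ℝ} (hK : 0 ≤ K) (hr : 0 ≤ r) : sinK K r ≤ r := by
  rcases hK.eq_or_lt with rfl | hK
  · exact (sinK_zero r).le
  · rw [sinK_of_pos hK, div_le_iff₀ (sqrt_pos.2 hK)]
    exact sin_le (by positivity)

theorem self_le_sinK {K r : ℝ} (hK : K ≤ 0) (hr : 0 ≤ r) : r ≤ sinK K r := by
  rcases hK.eq_or_lt with rfl | hK
  · exact (sinK_zero r).ge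
  · rw [sinK_of_neg hK, le_div_iff₀ (sqrt_pos.2 (neg_pos.2 hK))]
    exact self_le_sinh_iff.2 (by positivity)

theorem sinK_pos {K r : ℝ} (hr : 0 < r) (hrK : r * √K < π) : 0 < sinK K r := by
  rcases le_or_gt K 0 with hK | hK
  · exact hr.trans_le (self_le_sinK hK hr.le)
  · rw [sinK_of_pos hK]
    exact div_pos (sin_pos_of_pos_of_lt_pi (by positivity) hrK) (sqrt_pos.2 hK)

theorem sinK_eq_mul_sin_div {K r : ℝ} (hK : 0 < K) (hr : r ≠ 0) :
    sinK K r = r * (sin (r * √K) / (r * √K)) := by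
  rw [sinK_of_pos hK]
  field_simp

theorem sinK_eq_mul_sinh_div {K r : ℝ} (hK : K < 0) (hr : r ≠ 0) :
    sinK K r = r * (sinh (r * √(-K)) / (r * √(-K))) := by
  rw [sinK_of_neg hK]
  field_simp

-- `√K = 0` for `K ≤ 0`, so `hrK` only restricts `r` when `K > 0`.
theorem sinK_le_sinK_of_le {κ K r : ℝ} (hκK : κ ≤ K) (hr : 0 < r) (hrK : r * √K ≤ π) :
    sinK K r ≤ sinK κ r := by
  rcases le_or_gt κ 0 with hκ | hκ
  · rcases le_or_gt 0 K with hK | hK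
    · exact (sinK_le_self hK hr.le).trans (self_le_sinK hκ hr.le)
    rw [sinK_eq_mul_sinh_div hK hr.ne', sinK_eq_mul_sinh_div (hκK.trans_lt hK) hr.ne']
    gcongr ?_ * ?_
    exact sinh_div_le_sinh_div_of_le (mul_pos hr (sqrt_pos.2 (neg_pos.2 hK)))
      (mul_le_mul_of_nonneg_left (sqrt_le_sqrt (neg_le_neg hκK)) hr.le)
  · rw [sinK_eq_mul_sin_div (hκ.trans_le hκK) hr.ne', sinK_eq_mul_sin_div hκ hr.ne']
    gcongr ?_ * ?_
    exact sin_div_le_sin_div_of_le (mul_pos hr (sqrt_pos.2 hκ))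
      (mul_le_mul_of_nonneg_left (sqrt_le_sqrt hκK) hr.le) hrK

theorem cotK_sq_comparison (κ K : ℝ) (hκK : κ ≤ K) (r : ℝ) (hr : 0 < r)
    (hrK : 0 < K → r < Real.pi / (2 * Real.sqrt K)) :
    (cotK K r) ^ 2 - (cotK κ r) ^ 2 ≥ -(K - κ) := by
  have hrπ : r * √K < π := by
    rcases le_or_gt K 0 with hK | hK
    · rw [sqrt_eq_zero'.2 hK, mul_zero]
      exact pi_pos
    · have := (lt_div_iff₀ (by positivity)).1 (hrK hK)
      linarith [pi_pos]
  have hsK := sinK_pos hr hrπ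
  have hsκK := sinK_le_sinK_of_le hκK hr hrπ.le
  suffices cotK κ r ^ 2 + κ ≤ cotK K r ^ 2 + K by linarith
  rw [cotK_sq_add hsK.ne', cotK_sq_add (hsK.trans_le hsκK).ne']
  gcongr
end

section
/- Let u be a harmonic function on the ball B(0,R) ⊂ ℝ² and define q(r) = ∫_{0}^{2π} u(r cos θ, r sin θ)² r dθ for 0 < r < R. Then log q is a convex function of log r. -/
/-!
Write `u = Re F` with `F` holomorphic on the disc, put `z = e^(t + iθ)` and `D = z F'(z)`, so
that `∂_t F(z) = D` and `∂_θ F(z) = i D`. For `Q(t) = ∫ (Re F)² dθ` one finds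
`Q' = 2 ∫ Re F · Re D` and, integrating by parts in `θ`, `Q'' = 2 ∫ ((Re D)² + (Im D)²)`.
The mean value property of the holomorphic function `D²`, which vanishes at `0`, gives
`∫ (Re D)² = ∫ (Im D)²`. Hence `c² Q + 2c Q' + Q'' = ∫ (c Re F + 2 Re D)² ≥ 0` for every `c`.
Where `Q > 0` this is `Q Q'' ≥ Q'²`, i.e. `(log Q)'' ≥ 0`. It also makes every `e^(ct) Q` convex,
so `Q` cannot vanish at one point without vanishing everywhere, where `log 0 = 0` keeps the
statement true. The inequality is invariant under `Q ↦ e^(kt) Q`, which takes care of the weight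
`r = e^t` of arc length.
-/

open Real Set Metric Filter Topology MeasureTheory

section LogConvexity

variable {s : Set ℝ} {Q Q' Q'' : ℝ → ℝ}

theorem hasDerivAt_exp_const_mul (c t : ℝ) :
    HasDerivAt (fun t => exp (c * t)) (exp (c * t) * c) t := by
  simpa using ((hasDerivAt_id t).const_mul c).exp

theorem convexOn_exp_mul_of_quadratic_nonneg (hs : IsOpen s) (hsc : Convex ℝ s)
    (hQ : ∀ t ∈ s, HasDerivAt Q (Q' t) t) (hQ' : ∀ t ∈ s, HasDerivAt Q' (Q'' t) t)
    (hquad : ∀ t ∈ s, ∀ c : ℝ, 0 ≤ c ^ 2 * Q t + 2 * c * Q' t + Q'' t) (c : ℝ) :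
    ConvexOn ℝ s (fun t => exp (c * t) * Q t) := by
  have hexp := hasDerivAt_exp_const_mul c
  refine convexOn_of_hasDerivWithinAt2_nonneg hsc
    (f' := fun t => exp (c * t) * (c * Q t + Q' t))
    (f'' := fun t => exp (c * t) * (c ^ 2 * Q t + 2 * c * Q' t + Q'' t))
    (fun t ht => ((hexp t).fun_mul (hQ t ht)).continuousAt.continuousWithinAt) ?_ ?_ ?_ <;>
  intro t ht <;> rw [hs.interior_eq] at ht
  · exact (((hexp t).fun_mul (hQ t ht)).congr_deriv (by ring)).hasDerivWithinAt
  · exact (((hexp t).fun_mul (((hQ t ht).const_mul c).fun_add (hQ' t ht))).congr_deriv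
      (by ring)).hasDerivWithinAt
  · exact mul_nonneg (exp_pos _).le (hquad t ht c)

theorem pos_of_quadratic_nonneg (hs : IsOpen s) (hsc : Convex ℝ s)
    (hQ : ∀ t ∈ s, HasDerivAt Q (Q' t) t) (hQ' : ∀ t ∈ s, HasDerivAt Q' (Q'' t) t)
    (hquad : ∀ t ∈ s, ∀ c : ℝ, 0 ≤ c ^ 2 * Q t + 2 * c * Q' t + Q'' t)
    {t₀ t : ℝ} (ht₀ : t₀ ∈ s) (ht : t ∈ s) (hpos : 0 < Q t₀) : 0 < Q t := by
  set c := -Q' t₀ / Q t₀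
  have hcrit : HasDerivAt (fun t => exp (c * t) * Q t) 0 t₀ := by
    refine ((hasDerivAt_exp_const_mul c t₀).fun_mul (hQ t₀ ht₀)).congr_deriv ?_
    simp only [c]
    field_simp
    ring
  have hmin := (convexOn_exp_mul_of_quadratic_nonneg hs hsc hQ hQ' hquad c)
    |>.isMinOn_of_rightDeriv_eq_zero (hs.interior_eq.symm ▸ ht₀)
      (hcrit.hasDerivWithinAt.derivWithin (uniqueDiffWithinAt_Ioi t₀))
  have hle : exp (c * t₀) * Q t₀ ≤ exp (c * t) * Q t := hmin ht
  exact pos_of_mul_pos_right ((mul_pos (exp_pos _) hpos).trans_le hle) (exp_pos _).le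

theorem convexOn_log_of_quadratic_nonneg (hs : IsOpen s) (hsc : Convex ℝ s)
    (hQ : ∀ t ∈ s, HasDerivAt Q (Q' t) t) (hQ' : ∀ t ∈ s, HasDerivAt Q' (Q'' t) t)
    (hQ0 : ∀ t ∈ s, 0 ≤ Q t)
    (hquad : ∀ t ∈ s, ∀ c : ℝ, 0 ≤ c ^ 2 * Q t + 2 * c * Q' t + Q'' t) :
    ConvexOn ℝ s (fun t => log (Q t)) := by
  by_cases h : ∃ t₀ ∈ s, 0 < Q t₀
  · obtain ⟨t₀, ht₀, hpos⟩ := h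
    have hne (t) (ht : t ∈ s) : Q t ≠ 0 :=
      (pos_of_quadratic_nonneg hs hsc hQ hQ' hquad ht₀ ht hpos).ne'
    refine convexOn_of_hasDerivWithinAt2_nonneg hsc
      (f' := fun t => Q' t / Q t) (f'' := fun t => (Q'' t * Q t - Q' t * Q' t) / Q t ^ 2)
      (fun t ht => ((hQ t ht).log (hne t ht)).continuousAt.continuousWithinAt) ?_ ?_ ?_ <;>
    intro t ht <;> rw [hs.interior_eq] at ht
    · exact ((hQ t ht).log (hne t ht)).hasDerivWithinAt
    · exact ((hQ' t ht).div (hQ t ht) (hne t ht)).hasDerivWithinAt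
    · have hdiscrim := discrim_le_zero (a := Q t) (b := 2 * Q' t) (c := Q'' t)
        (fun x => by linarith [hquad t ht x])
      rw [discrim] at hdiscrim
      exact div_nonneg (by linarith) (sq_nonneg _)
  · push Not at h
    refine (convexOn_const 0 hsc).congr fun t ht => ?_
    simp [le_antisymm (h t ht) (hQ0 t ht)]

theorem convexOn_log_mul_exp_of_quadratic_nonneg (hs : IsOpen s) (hsc : Convex ℝ s)
    (hQ : ∀ t ∈ s, HasDerivAt Q (Q' t) t) (hQ' : ∀ t ∈ s, HasDerivAt Q' (Q'' t) t)
    (hQ0 : ∀ t ∈ s, 0 ≤ Q t)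
    (hquad : ∀ t ∈ s, ∀ c : ℝ, 0 ≤ c ^ 2 * Q t + 2 * c * Q' t + Q'' t) (k : ℝ) :
    ConvexOn ℝ s (fun t => log (Q t * exp (k * t))) := by
  have hexp := hasDerivAt_exp_const_mul k
  refine convexOn_log_of_quadratic_nonneg hs hsc
    (Q' := fun t => (Q' t + k * Q t) * exp (k * t))
    (Q'' := fun t => (Q'' t + 2 * k * Q' t + k ^ 2 * Q t) * exp (k * t))
    (fun t ht => ((hQ t ht).fun_mul (hexp t)).congr_deriv (by ring))
    (fun t ht => (((hQ' t ht).fun_add ((hQ t ht).const_mul k)).fun_mul (hexp t)).congr_deriv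
      (by ring))
    (fun t ht => mul_nonneg (hQ0 t ht) (exp_pos _).le) fun t ht c => ?_
  exact (mul_nonneg (hquad t ht (c + k)) (exp_pos (k * t)).le).trans_eq (by ring)

end LogConvexity

theorem hasDerivAt_intervalIntegral_of_continuousOn {s : Set ℝ} (hs : IsOpen s) {a b : ℝ}
    {F F' : ℝ → ℝ → ℝ} (hF : ∀ t ∈ s, Continuous (F t))
    (hF' : ContinuousOn (Function.uncurry F') (s ×ˢ univ))
    (hd : ∀ t ∈ s, ∀ θ, HasDerivAt (F · θ) (F' t θ) t) {t₀ : ℝ} (ht₀ : t₀ ∈ s) :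
    HasDerivAt (fun t => ∫ θ in a..b, F t θ) (∫ θ in a..b, F' t₀ θ) t₀ := by
  obtain ⟨ε, hε, hεs⟩ := nhds_basis_closedBall.mem_iff.1 (hs.mem_nhds ht₀)
  obtain ⟨M, hM⟩ := (isCompact_closedBall t₀ ε |>.prod isCompact_uIcc).exists_bound_of_continuousOn
    (hF'.mono (prod_mono hεs (subset_univ (uIcc a b))))
  have hF't₀ : Continuous (F' t₀) :=
    hF'.comp_continuous (Continuous.prodMk_right t₀) fun _ => ⟨ht₀, trivial⟩
  refine (intervalIntegral.hasDerivAt_integral_of_dominated_loc_of_deriv_le (bound := fun _ => M)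
    (ball_mem_nhds t₀ hε) ?_ ((hF t₀ ht₀).intervalIntegrable a b) hF't₀.aestronglyMeasurable
    (ae_of_all _ fun θ hθ t ht => hM (t, θ) ⟨ball_subset_closedBall ht, uIoc_subset_uIcc hθ⟩)
    intervalIntegrable_const
    (ae_of_all _ fun θ _ t ht => hd t (hεs (ball_subset_closedBall ht)) θ)).2
  filter_upwards [hs.mem_nhds ht₀] with t ht
  exact (hF t ht).aestronglyMeasurable

theorem integral_sq_mul_add_mul {a b : ℝ → ℝ} (ha : Continuous a) (hb : Continuous b)
    (x y c d : ℝ) :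
    ∫ θ in x..y, (c * a θ + d * b θ) ^ 2 =
      c ^ 2 * (∫ θ in x..y, a θ * a θ) + 2 * c * d * (∫ θ in x..y, a θ * b θ) +
        d ^ 2 * ∫ θ in x..y, b θ * b θ := by
  rw [← intervalIntegral.integral_const_mul, ← intervalIntegral.integral_const_mul,
    ← intervalIntegral.integral_const_mul, ← intervalIntegral.integral_add
      (Continuous.intervalIntegrable (by fun_prop) _ _)
      (Continuous.intervalIntegrable (by fun_prop) _ _),
    ← intervalIntegral.integral_add (Continuous.intervalIntegrable (by fun_prop) _ _)
      (Continuous.intervalIntegrable (by fun_prop) _ _)]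
  exact intervalIntegral.integral_congr fun θ _ => by ring

theorem deriv_deriv_comp_eq_fderiv_fderiv {E F : Type*} [NormedAddCommGroup E] [NormedSpace ℝ E]
    [NormedAddCommGroup F] [NormedSpace ℝ F] {u : E → F} {γ : ℝ → E} {v : E} {s₀ : ℝ}
    (hu : ContDiffAt ℝ 2 u (γ s₀)) (hγ : ∀ s, HasDerivAt γ v s) :
    deriv (fun s => deriv (fun t => u (γ t)) s) s₀ = fderiv ℝ (fderiv ℝ u) (γ s₀) v v := by
  have hdiff : ∀ᶠ s in 𝓝 s₀, DifferentiableAt ℝ u (γ s) :=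
    (hγ s₀).continuousAt.eventually
      ((hu.eventually (by simp)).mono fun _ h => h.differentiableAt (by norm_num))
  have hfirst : (fun s => deriv (fun t => u (γ t)) s) =ᶠ[𝓝 s₀] fun s => fderiv ℝ u (γ s) v :=
    hdiff.mono fun s hs => (hs.hasFDerivAt.comp_hasDerivAt s (hγ s)).deriv
  have hsecond := (((hu.fderiv_right (m := 1) le_rfl).differentiableAt (by norm_num)).hasFDerivAt
    |>.comp_hasDerivAt s₀ (hγ s₀)).clm_apply (hasDerivAt_const s₀ v)
  rw [hfirst.deriv_eq]
  simpa using hsecond.deriv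

theorem harmonicOnNhd_of_deriv_deriv_add_deriv_deriv_eq_zero {R : ℝ} {u : ℝ × ℝ → ℝ}
    (hu : ContDiffOn ℝ 2 u (ball 0 R))
    (hΔ : ∀ p ∈ ball (0 : ℝ × ℝ) R, deriv (fun s => deriv (fun t => u (t, p.2)) s) p.1 +
      deriv (fun s => deriv (fun t => u (p.1, t)) s) p.2 = 0) :
    InnerProductSpace.HarmonicOnNhd (fun z : ℂ => u (z.re, z.im)) (ball 0 R) := by
  have hmem {w : ℂ} (hw : w ∈ ball 0 R) : (w.re, w.im) ∈ ball (0 : ℝ × ℝ) R :=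
    mem_ball_zero_iff.2 ((Complex.equivRealProd_apply_le w).trans_lt (mem_ball_zero_iff.1 hw))
  have hC2 {w : ℂ} (hw : w ∈ ball 0 R) : ContDiffAt ℝ 2 (fun z : ℂ => u (z.re, z.im)) w :=
    (hu.contDiffAt (isOpen_ball.mem_nhds (hmem hw))).comp w
      Complex.equivRealProdCLM.contDiff.contDiffAt
  refine fun w hw => ⟨hC2 hw, ?_⟩
  filter_upwards [isOpen_ball.mem_nhds hw] with w hw
  -- The slices of `u` through `w` are the horizontal and vertical lines of `ℂ` through `w`.
  have hre := deriv_deriv_comp_eq_fderiv_fderiv (γ := fun t : ℝ => t + w.im * Complex.I)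
    (v := 1) (s₀ := w.re) (by simpa using hC2 hw)
    fun s => by simpa using ((hasDerivAt_id s).ofReal_comp).add_const (w.im * Complex.I)
  have him := deriv_deriv_comp_eq_fderiv_fderiv (γ := fun t : ℝ => w.re + t * Complex.I)
    (v := Complex.I) (s₀ := w.im) (by simpa using hC2 hw)
    fun s => by simpa using ((hasDerivAt_id s).ofReal_comp.mul_const Complex.I).const_add (w.re : ℂ)
  simp only [Complex.add_re, Complex.ofReal_re, Complex.mul_re, Complex.ofReal_im,
    Complex.I_re, Complex.I_im, Complex.add_im, Complex.mul_im, mul_zero, sub_zero,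
    mul_one, add_zero, zero_add, Complex.re_add_im] at hre him
  simp only [InnerProductSpace.laplacian_eq_iteratedFDeriv_complexPlane,
    iteratedFDeriv_two_apply, Matrix.cons_val_zero, Matrix.cons_val_one, Pi.zero_apply]
  rw [← hre, ← him]
  exact hΔ _ (hmem hw)

/-- The Euler operator `z ∂_z`, which is `∂_t` in the coordinate `z = e^(t + iθ)`. -/
noncomputable def eulerDeriv (f : ℂ → ℂ) (z : ℂ) : ℂ := z * deriv f z

section CircleCalculus

variable {f g : ℂ → ℂ} {R r t θ : ℝ}

theorem DifferentiableOn.eulerDeriv {s : Set ℂ} (hf : DifferentiableOn ℂ f s) (hs : IsOpen s) :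
    DifferentiableOn ℂ (eulerDeriv f) s :=
  differentiableOn_id.mul (hf.deriv hs)

theorem circleMap_mem_ball_zero (hr : |r| < R) (θ : ℝ) : circleMap 0 r θ ∈ ball 0 R := by
  simpa using hr

theorem abs_exp_lt_of_lt_log (hR : 0 < R) (ht : t < log R) : |rexp t| < R := by
  rwa [abs_exp, ← lt_log_iff_exp_lt hR]

theorem hasDerivAt_comp_circleMap (hf : DifferentiableAt ℂ f (circleMap 0 r θ)) :
    HasDerivAt (fun φ => f (circleMap 0 r φ)) (Complex.I * eulerDeriv f (circleMap 0 r θ)) θ :=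
  (hf.hasDerivAt.comp θ (hasDerivAt_circleMap 0 r θ)).congr_deriv (by rw [eulerDeriv]; ring)

theorem hasDerivAt_comp_circleMap_exp (hf : DifferentiableAt ℂ f (circleMap 0 (rexp t) θ)) :
    HasDerivAt (fun s => f (circleMap 0 (rexp s) θ)) (eulerDeriv f (circleMap 0 (rexp t) θ)) t := by
  have hc : HasDerivAt (fun s => circleMap 0 (rexp s) θ) (circleMap 0 (rexp t) θ) t := by
    simpa [circleMap] using
      (Real.hasDerivAt_exp t).ofReal_comp.mul_const (Complex.exp (θ * Complex.I))
  exact (hf.hasDerivAt.comp t hc).congr_deriv (mul_comm _ _)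

theorem HasDerivAt.complex_re {g : ℝ → ℂ} {g' : ℂ} {x : ℝ} (h : HasDerivAt g g' x) :
    HasDerivAt (fun x => (g x).re) g'.re x :=
  Complex.reCLM.hasFDerivAt.comp_hasDerivAt x h

theorem HasDerivAt.complex_im {g : ℝ → ℂ} {g' : ℂ} {x : ℝ} (h : HasDerivAt g g' x) :
    HasDerivAt (fun x => (g x).im) g'.im x :=
  Complex.imCLM.hasFDerivAt.comp_hasDerivAt x h

theorem continuousOn_comp_circleMap_exp {E : Type*} [TopologicalSpace E] {g : ℂ → E} (hR : 0 < R)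
    (hg : ContinuousOn g (ball 0 R)) :
    ContinuousOn (fun p : ℝ × ℝ => g (circleMap 0 (rexp p.1) p.2)) (Iio (log R) ×ˢ univ) :=
  hg.comp (by fun_prop) fun p hp => circleMap_mem_ball_zero (abs_exp_lt_of_lt_log hR hp.1) p.2

theorem continuous_comp_circleMap {E : Type*} [TopologicalSpace E] {g : ℂ → E}
    (hg : ContinuousOn g (ball 0 R)) (hr : |r| < R) : Continuous (fun θ => g (circleMap 0 r θ)) :=
  hg.comp_continuous (continuous_circleMap 0 r) (circleMap_mem_ball_zero hr)

end CircleCalculus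

section Holomorphic

variable {f g : ℂ → ℂ} {R r t : ℝ}

theorem integral_re_mul_re_eulerDeriv (hf : DifferentiableOn ℂ f (ball 0 R))
    (hg : DifferentiableOn ℂ g (ball 0 R)) (hr : |r| < R) :
    ∫ θ in 0..2 * π, (f (circleMap 0 r θ)).re * (eulerDeriv g (circleMap 0 r θ)).re =
      ∫ θ in 0..2 * π, (eulerDeriv f (circleMap 0 r θ)).im * (g (circleMap 0 r θ)).im := by
  have hmem θ := isOpen_ball.mem_nhds (circleMap_mem_ball_zero hr θ)
  have hf' := continuous_comp_circleMap (hf.eulerDeriv isOpen_ball).continuousOn hr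
  have hg' := continuous_comp_circleMap (hg.eulerDeriv isOpen_ball).continuousOn hr
  have hf0 := continuous_comp_circleMap hf.continuousOn hr
  have hg0 := continuous_comp_circleMap hg.continuousOn hr
  rw [← sub_eq_zero, ← intervalIntegral.integral_sub
    (Continuous.intervalIntegrable (by continuity) _ _)
    (Continuous.intervalIntegrable (by continuity) _ _),
    intervalIntegral.integral_eq_sub_of_hasDerivAt (f := fun θ =>
      (f (circleMap 0 r θ)).re * (g (circleMap 0 r θ)).im) (fun θ _ => ?_)
    (Continuous.intervalIntegrable (by continuity) _ _), sub_eq_zero]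
  · simpa using congrArg (fun z => (f z).re * (g z).im) (periodic_circleMap 0 r 0)
  · refine ((hasDerivAt_comp_circleMap (hf.differentiableAt (hmem θ))).complex_re.fun_mul
      (hasDerivAt_comp_circleMap (hg.differentiableAt (hmem θ))).complex_im).congr_deriv ?_
    simp only [Complex.mul_re, Complex.mul_im, Complex.I_re, Complex.I_im]
    ring

theorem integral_re_eulerDeriv_mul_self (hf : DifferentiableOn ℂ f (ball 0 R)) (hr : |r| < R) :
    ∫ θ in 0..2 * π, (eulerDeriv f (circleMap 0 r θ)).re * (eulerDeriv f (circleMap 0 r θ)).re =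
      ∫ θ in 0..2 * π,
        (eulerDeriv f (circleMap 0 r θ)).im * (eulerDeriv f (circleMap 0 r θ)).im := by
  have hd : DifferentiableOn ℂ (fun z => eulerDeriv f z ^ 2) (ball 0 R) :=
    (hf.eulerDeriv isOpen_ball).pow 2
  have hc := continuous_comp_circleMap (hf.eulerDeriv isOpen_ball).continuousOn hr
  have hmean := (hd.diffContOnCl_ball (closedBall_subset_ball hr)).circleAverage
  rw [circleAverage_def, eulerDeriv, zero_mul, sq, zero_mul,
    smul_eq_zero_iff_right (by positivity)] at hmean
  rw [← sub_eq_zero, ← intervalIntegral.integral_sub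
    (Continuous.intervalIntegrable (by continuity) _ _)
    (Continuous.intervalIntegrable (by continuity) _ _)]
  calc _ = ∫ θ in 0..2 * π, (eulerDeriv f (circleMap 0 r θ) ^ 2).re :=
        intervalIntegral.integral_congr fun θ _ => by simp [sq]
    _ = (∫ θ in 0..2 * π, eulerDeriv f (circleMap 0 r θ) ^ 2).re :=
        Complex.reCLM.intervalIntegral_comp_comm
          ((continuous_comp_circleMap hd.continuousOn hr).intervalIntegrable _ _)
    _ = 0 := by rw [hmean, Complex.zero_re]

theorem hasDerivAt_integral_re_mul_re (hR : 0 < R) (hf : DifferentiableOn ℂ f (ball 0 R))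
    (hg : DifferentiableOn ℂ g (ball 0 R)) (ht : t < log R) :
    HasDerivAt (fun t => ∫ θ in 0..2 * π,
        (f (circleMap 0 (rexp t) θ)).re * (g (circleMap 0 (rexp t) θ)).re)
      (∫ θ in 0..2 * π,
        ((eulerDeriv f (circleMap 0 (rexp t) θ)).re * (g (circleMap 0 (rexp t) θ)).re +
          (f (circleMap 0 (rexp t) θ)).re * (eulerDeriv g (circleMap 0 (rexp t) θ)).re)) t := by
  have hre {h : ℂ → ℂ} (hh : DifferentiableOn ℂ h (ball 0 R)) :
      ContinuousOn (fun p : ℝ × ℝ => (h (circleMap 0 (rexp p.1) p.2)).re) (Iio (log R) ×ˢ univ) :=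
    Complex.continuous_re.comp_continuousOn (continuousOn_comp_circleMap_exp hR hh.continuousOn)
  apply hasDerivAt_intervalIntegral_of_continuousOn isOpen_Iio _ _ _ ht
  · intro t ht
    have := continuous_comp_circleMap hf.continuousOn (abs_exp_lt_of_lt_log hR ht)
    have := continuous_comp_circleMap hg.continuousOn (abs_exp_lt_of_lt_log hR ht)
    continuity
  · exact ((hre (hf.eulerDeriv isOpen_ball)).fun_mul (hre hg)).fun_add
      ((hre hf).fun_mul (hre (hg.eulerDeriv isOpen_ball)))
  · intro t ht θ
    have hmem := isOpen_ball.mem_nhds (circleMap_mem_ball_zero (abs_exp_lt_of_lt_log hR ht) θ)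
    exact (hasDerivAt_comp_circleMap_exp (hf.differentiableAt hmem)).complex_re.fun_mul
      (hasDerivAt_comp_circleMap_exp (hg.differentiableAt hmem)).complex_re

theorem convexOn_log_integral_re_sq_mul_exp (hR : 0 < R) (hf : DifferentiableOn ℂ f (ball 0 R)) :
    ConvexOn ℝ (Iio (log R))
      (fun t => log (∫ θ in 0..2 * π, (f (circleMap 0 (rexp t) θ)).re ^ 2 * rexp t)) := by
  have hf' := hf.eulerDeriv isOpen_ball
  have hre {h : ℂ → ℂ} (hh : DifferentiableOn ℂ h (ball 0 R)) {t : ℝ} (ht : t < log R) :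
      Continuous (fun θ => (h (circleMap 0 (rexp t) θ)).re) :=
    Complex.continuous_re.comp
      (continuous_comp_circleMap hh.continuousOn (abs_exp_lt_of_lt_log hR ht))
  refine (convexOn_log_mul_exp_of_quadratic_nonneg isOpen_Iio (convex_Iio _)
    (Q := fun t => ∫ θ in 0..2 * π,
      (f (circleMap 0 (rexp t) θ)).re * (f (circleMap 0 (rexp t) θ)).re)
    (Q' := fun t => 2 * ∫ θ in 0..2 * π,
      (f (circleMap 0 (rexp t) θ)).re * (eulerDeriv f (circleMap 0 (rexp t) θ)).re)
    (Q'' := fun t => 4 * ∫ θ in 0..2 * π,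
      (eulerDeriv f (circleMap 0 (rexp t) θ)).re * (eulerDeriv f (circleMap 0 (rexp t) θ)).re)
    (fun t ht => ?_) (fun t ht => ?_) (fun t ht => ?_) (fun t ht c => ?_) 1).congr fun t _ => ?_
  · refine (hasDerivAt_integral_re_mul_re hR hf hf ht).congr_deriv ?_
    rw [← intervalIntegral.integral_const_mul]
    exact intervalIntegral.integral_congr fun θ _ => by ring
  · refine ((hasDerivAt_integral_re_mul_re hR hf hf' ht).const_mul 2).congr_deriv ?_
    rw [intervalIntegral.integral_add (((hre hf' ht).fun_mul (hre hf' ht)).intervalIntegrable _ _)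
      (((hre hf ht).fun_mul (hre (hf'.eulerDeriv isOpen_ball) ht)).intervalIntegrable _ _),
      integral_re_mul_re_eulerDeriv hf hf' (abs_exp_lt_of_lt_log hR ht),
      ← integral_re_eulerDeriv_mul_self hf (abs_exp_lt_of_lt_log hR ht)]
    ring
  · exact intervalIntegral.integral_nonneg (by positivity) fun θ _ => mul_self_nonneg _
  · calc 0 ≤ ∫ θ in 0..2 * π, (c * (f (circleMap 0 (rexp t) θ)).re +
          2 * (eulerDeriv f (circleMap 0 (rexp t) θ)).re) ^ 2 :=
          intervalIntegral.integral_nonneg (by positivity) fun θ _ => sq_nonneg _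
      _ = _ := by
        rw [integral_sq_mul_add_mul (hre hf ht) (hre hf' ht)]
        ring
  · simp only [one_mul, sq, intervalIntegral.integral_mul_const]

end Holomorphic

theorem log_convexity_harmonic_disk
    (R : ℝ) (hR : 0 < R) (u : ℝ × ℝ → ℝ)
    (hu_smooth : ContDiffOn ℝ 2 u (Metric.ball (0 : ℝ × ℝ) R))
    (hu_harm : ∀ p ∈ Metric.ball (0 : ℝ × ℝ) R,
      deriv (fun s => deriv (fun t => u (t, p.2)) s) p.1 +
        deriv (fun s => deriv (fun t => u (p.1, t)) s) p.2 = 0) :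
    ConvexOn ℝ (Set.Iio (Real.log R))
      (fun t => Real.log (∫ θ in (0:ℝ)..(2 * Real.pi),
        (u (Real.exp t * Real.cos θ, Real.exp t * Real.sin θ)) ^ 2 * Real.exp t)) := by
  obtain ⟨F, hF, hFu⟩ := (harmonicOnNhd_of_deriv_deriv_add_deriv_deriv_eq_zero hu_smooth
    hu_harm).exists_analyticOnNhd_ball_re_eq
  refine (convexOn_log_integral_re_sq_mul_exp hR hF.differentiableOn).congr fun t ht => ?_
  refine congrArg log (intervalIntegral.integral_congr fun θ _ => ?_)
  have hre : (F (circleMap 0 (rexp t) θ)).re =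
      u ((circleMap 0 (rexp t) θ).re, (circleMap 0 (rexp t) θ).im) :=
    hFu (circleMap_mem_ball_zero (abs_exp_lt_of_lt_log hR ht) θ)
  rw [hre]
  simp [circleMap, Complex.exp_ofReal_mul_I_re, Complex.exp_ofReal_mul_I_im, -Complex.ofReal_exp]
end

section
/- Let u be harmonic on B(0,R) ⊂ ℝ² and q(r) = ∫_{0}^{2π} u(r cos θ, r sin θ)² r dθ. Then q'(r) ≥ q(r)/r for 0 < r < R; in particular q is nondecreasing. -/
/-!
Write `v ρ θ = u (ρ cos θ, ρ sin θ)`, so that `q ρ = ρ ∫ v² dθ`. Differentiating under the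
integral, `q' ρ = q ρ / ρ + 2 Φ ρ`, where `Φ ρ = ρ ∫ v v_ρ dθ` is the flux of `∇(u² / 2)` through
the circle of radius `ρ`. Now `Φ 0 = 0`, and the Laplace equation in polar coordinates,
`ρ² v_ρρ + ρ v_ρ + v_θθ = 0`, followed by an integration by parts in the periodic variable `θ`,
gives `Φ' ρ = ∫ (ρ v_ρ² + v_θ² / ρ) dθ ≥ 0`. Hence `Φ ≥ 0`, so `q' ≥ q / ρ ≥ 0`.
-/

open Real Set Filter Topology Metric MeasureTheory

theorem continuous_of_continuousOn_prod_univ {X Y Z : Type*} [TopologicalSpace X]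
    [TopologicalSpace Y] [TopologicalSpace Z] {G : X → Y → Z} {U : Set X}
    (hG : ContinuousOn (fun p : X × Y => G p.1 p.2) (U ×ˢ univ)) {x : X} (hx : x ∈ U) :
    Continuous (G x) :=
  hG.comp_continuous (f := fun y => (x, y)) (by fun_prop) fun y => ⟨hx, mem_univ y⟩

theorem hasDerivAt_intervalIntegral_of_continuousOn_s15 {F F' : ℝ → ℝ → ℝ} {U : Set ℝ}
    {a b x₀ : ℝ} (hU : IsOpen U) (hx₀ : x₀ ∈ U)
    (hF : ContinuousOn (fun p : ℝ × ℝ => F p.1 p.2) (U ×ˢ univ))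
    (hF' : ContinuousOn (fun p : ℝ × ℝ => F' p.1 p.2) (U ×ˢ univ))
    (hderiv : ∀ x ∈ U, ∀ t, HasDerivAt (F · t) (F' x t) x) :
    HasDerivAt (fun x => ∫ t in a..b, F x t) (∫ t in a..b, F' x₀ t) x₀ := by
  obtain ⟨δ, hδ, hball⟩ := Metric.isOpen_iff.1 hU x₀ hx₀
  have hK : closedBall x₀ (δ / 2) ×ˢ uIcc a b ⊆ U ×ˢ univ :=
    prod_mono ((closedBall_subset_ball (half_lt_self hδ)).trans hball) (subset_univ _)
  obtain ⟨C, hC⟩ := ((isCompact_closedBall x₀ (δ / 2)).prod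
    isCompact_uIcc).exists_bound_of_continuousOn (hF'.mono hK)
  refine (intervalIntegral.hasDerivAt_integral_of_dominated_loc_of_deriv_le (bound := fun _ => C)
    (ball_mem_nhds x₀ (half_pos hδ)) ?_
    ((continuous_of_continuousOn_prod_univ hF hx₀).intervalIntegrable a b)
    (continuous_of_continuousOn_prod_univ hF' hx₀).aestronglyMeasurable ?_
    intervalIntegrable_const ?_).2
  · filter_upwards [hU.mem_nhds hx₀] with x hx
    exact (continuous_of_continuousOn_prod_univ hF hx).aestronglyMeasurable
  · exact ae_of_all _ fun t ht x hx =>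
      hC (x, t) ⟨ball_subset_closedBall hx, uIoc_subset_uIcc ht⟩
  · exact ae_of_all _ fun t _ x hx =>
      hderiv x (hball (ball_subset_ball (half_le_self hδ.le) hx)) t

theorem integral_mul_second_deriv_eq_neg_integral_deriv_sq {f f' f'' : ℝ → ℝ} {a b : ℝ}
    (hf : ∀ t, HasDerivAt f (f' t) t) (hf' : ∀ t, HasDerivAt f' (f'' t) t)
    (hf'' : IntervalIntegrable f'' volume a b) (hfab : f b = f a) (hf'ab : f' b = f' a) :
    ∫ t in a..b, f t * f'' t = -∫ t in a..b, f' t ^ 2 := by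
  have hcf' : Continuous f' := continuous_iff_continuousAt.2 fun t => (hf' t).continuousAt
  rw [intervalIntegral.integral_mul_deriv_eq_deriv_mul_of_hasDerivAt
    (continuous_iff_continuousAt.2 fun t => (hf t).continuousAt).continuousOn hcf'.continuousOn
    (fun t _ => hf t) (fun t _ => hf' t) (hcf'.intervalIntegrable a b) hf'', hfab, hf'ab]
  simp only [sub_self, zero_sub, sq]

section SecondDerivative

variable {E F : Type*} [NormedAddCommGroup E] [NormedSpace ℝ E] [NormedAddCommGroup F]
  [NormedSpace ℝ F] {u : E → F} {γ γ' : ℝ → E} {w : E} {t : ℝ}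

theorem hasDerivAt_fderiv_comp_apply (hu : ContDiffAt ℝ 2 u (γ t)) (hγ : HasDerivAt γ (γ' t) t)
    (hγ' : HasDerivAt γ' w t) :
    HasDerivAt (fun s => fderiv ℝ u (γ s) (γ' s))
      (fderiv ℝ (fderiv ℝ u) (γ t) (γ' t) (γ' t) + fderiv ℝ u (γ t) w) t :=
  (((hu.fderiv_right (m := 1) le_rfl).differentiableAt one_ne_zero).hasFDerivAt.comp_hasDerivAt
    t hγ).clm_apply hγ'

theorem deriv_deriv_comp (hu : ContDiffAt ℝ 2 u (γ t)) (hγ : ∀ s, HasDerivAt γ (γ' s) s)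
    (hγ' : HasDerivAt γ' w t) :
    deriv (fun s => deriv (fun r => u (γ r)) s) t
      = fderiv ℝ (fderiv ℝ u) (γ t) (γ' t) (γ' t) + fderiv ℝ u (γ t) w := by
  have hnear : ∀ᶠ s in 𝓝 t, ContDiffAt ℝ 2 u (γ s) :=
    (hγ t).continuousAt.tendsto.eventually (hu.eventually (by simp))
  have heq : (fun s => deriv (fun r => u (γ r)) s) =ᶠ[𝓝 t]
      fun s => fderiv ℝ u (γ s) (γ' s) := by
    filter_upwards [hnear] with s hs
    exact ((hs.differentiableAt two_ne_zero).hasFDerivAt.comp_hasDerivAt s (hγ s)).deriv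
  rw [heq.deriv_eq]
  exact (hasDerivAt_fderiv_comp_apply hu (hγ t) hγ').deriv

end SecondDerivative

theorem apply_self_add_apply_perp_self (H : (ℝ × ℝ) →L[ℝ] (ℝ × ℝ) →L[ℝ] ℝ) (a b : ℝ) :
    H (a, b) (a, b) + H (-b, a) (-b, a)
      = (a ^ 2 + b ^ 2) * (H (1, 0) (1, 0) + H (0, 1) (0, 1)) := by
  have h : ∀ x y : ℝ, ((x, y) : ℝ × ℝ) = x • (1, 0) + y • (0, 1) := by simp
  rw [h a b, h (-b) a]
  simp only [map_add, map_smul, add_apply, smul_apply, smul_eq_mul]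
  ring

namespace PlanePolar

noncomputable section

def laplacian (u : ℝ × ℝ → ℝ) (p : ℝ × ℝ) : ℝ :=
  fderiv ℝ (fderiv ℝ u) p (1, 0) (1, 0) + fderiv ℝ (fderiv ℝ u) p (0, 1) (0, 1)

theorem deriv_deriv_add_deriv_deriv_eq_laplacian {u : ℝ × ℝ → ℝ} {p : ℝ × ℝ}
    (hu : ContDiffAt ℝ 2 u p) :
    deriv (fun s => deriv (fun t => u (t, p.2)) s) p.1
      + deriv (fun s => deriv (fun t => u (p.1, t)) s) p.2 = laplacian u p := by
  rw [deriv_deriv_comp (γ := fun t => (t, p.2)) (γ' := fun _ => (1, 0)) hu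
      (fun s => (hasDerivAt_id s).prodMk (hasDerivAt_const s p.2)) (hasDerivAt_const _ _),
    deriv_deriv_comp (γ := fun t => (p.1, t)) (γ' := fun _ => (0, 1)) hu
      (fun s => (hasDerivAt_const s p.1).prodMk (hasDerivAt_id s)) (hasDerivAt_const _ _)]
  simp [laplacian]

def dir (θ : ℝ) : ℝ × ℝ := (cos θ, sin θ)

def dirPerp (θ : ℝ) : ℝ × ℝ := (-sin θ, cos θ)

@[fun_prop]
theorem continuous_dir : Continuous dir := by
  unfold dir; fun_prop

@[fun_prop]
theorem continuous_dirPerp : Continuous dirPerp := by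
  unfold dirPerp; fun_prop

theorem hasDerivAt_dir (θ : ℝ) : HasDerivAt dir (dirPerp θ) θ :=
  (hasDerivAt_cos θ).prodMk (hasDerivAt_sin θ)

theorem hasDerivAt_dirPerp (θ : ℝ) : HasDerivAt dirPerp (-dir θ) θ :=
  (hasDerivAt_sin θ).neg.prodMk (hasDerivAt_cos θ)

theorem hasDerivAt_smul_dir (ρ θ : ℝ) : HasDerivAt (· • dir θ) (dir θ) ρ := by
  simpa using (hasDerivAt_id ρ).smul_const (dir θ)

theorem norm_dir_le (θ : ℝ) : ‖dir θ‖ ≤ 1 := by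
  simp [dir, Prod.norm_def, abs_cos_le_one, abs_sin_le_one]

theorem smul_dir_mem_ball {R ρ : ℝ} (hρ : ρ ∈ ball (0 : ℝ) R) (θ : ℝ) :
    ρ • dir θ ∈ ball (0 : ℝ × ℝ) R := by
  rw [mem_ball_zero_iff] at hρ ⊢
  calc ‖ρ • dir θ‖ = ‖ρ‖ * ‖dir θ‖ := norm_smul ρ (dir θ)
    _ ≤ ‖ρ‖ := mul_le_of_le_one_right (norm_nonneg ρ) (norm_dir_le θ)
    _ < R := hρ

theorem Ico_subset_ball_zero (R : ℝ) : Ico 0 R ⊆ ball (0 : ℝ) R := fun ρ hρ => by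
  rw [mem_ball_zero_iff, norm_of_nonneg hρ.1]
  exact hρ.2

variable {R ρ θ : ℝ} {u : ℝ × ℝ → ℝ}

theorem continuousOn_comp_smul_dir {X : Type*} [TopologicalSpace X] {g : ℝ × ℝ → X}
    (hg : ContinuousOn g (ball 0 R)) :
    ContinuousOn (fun p : ℝ × ℝ => g (p.1 • dir p.2)) (ball 0 R ×ˢ univ) :=
  hg.comp (by fun_prop) fun p hp => smul_dir_mem_ball hp.1 p.2

theorem continuous_comp_smul_dir {X : Type*} [TopologicalSpace X] {g : ℝ × ℝ → X}
    (hg : ContinuousOn g (ball 0 R)) (hρ : ρ ∈ ball (0 : ℝ) R) :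
    Continuous fun θ => g (ρ • dir θ) :=
  hg.comp_continuous (by fun_prop) (smul_dir_mem_ball hρ)

variable (u) in
def radialDeriv (ρ θ : ℝ) : ℝ := fderiv ℝ u (ρ • dir θ) (dir θ)

variable (u) in
def angularDeriv (ρ θ : ℝ) : ℝ := fderiv ℝ u (ρ • dir θ) (ρ • dirPerp θ)

variable (u) in
def radialDeriv2 (ρ θ : ℝ) : ℝ := fderiv ℝ (fderiv ℝ u) (ρ • dir θ) (dir θ) (dir θ)

variable (u) in
def angularDeriv2 (ρ θ : ℝ) : ℝ :=
  fderiv ℝ (fderiv ℝ u) (ρ • dir θ) (ρ • dirPerp θ) (ρ • dirPerp θ) - ρ * radialDeriv u ρ θ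

theorem laplacian_polar :
    ρ ^ 2 * radialDeriv2 u ρ θ + ρ * radialDeriv u ρ θ + angularDeriv2 u ρ θ
      = ρ ^ 2 * laplacian u (ρ • dir θ) := by
  have h := apply_self_add_apply_perp_self (fderiv ℝ (fderiv ℝ u) (ρ • dir θ)) (cos θ) (sin θ)
  simp only [laplacian, radialDeriv2, angularDeriv2, dir, dirPerp, map_smul, smul_apply,
    smul_eq_mul] at h ⊢
  rw [cos_sq_add_sin_sq, one_mul] at h
  linear_combination ρ ^ 2 * h

theorem contDiffAt_smul_dir (hu : ContDiffOn ℝ 2 u (ball 0 R)) (hρ : ρ ∈ ball (0 : ℝ) R)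
    (θ : ℝ) : ContDiffAt ℝ 2 u (ρ • dir θ) :=
  hu.contDiffAt (isOpen_ball.mem_nhds (smul_dir_mem_ball hρ θ))

theorem hasDerivAt_radial (hu : ContDiffOn ℝ 2 u (ball 0 R)) (hρ : ρ ∈ ball (0 : ℝ) R) :
    HasDerivAt (fun ρ => u (ρ • dir θ)) (radialDeriv u ρ θ) ρ :=
  ((contDiffAt_smul_dir hu hρ θ).differentiableAt two_ne_zero).hasFDerivAt.comp_hasDerivAt ρ
    (hasDerivAt_smul_dir ρ θ)

theorem hasDerivAt_radialDeriv (hu : ContDiffOn ℝ 2 u (ball 0 R)) (hρ : ρ ∈ ball (0 : ℝ) R) :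
    HasDerivAt (radialDeriv u · θ) (radialDeriv2 u ρ θ) ρ := by
  simpa [radialDeriv, radialDeriv2] using
    hasDerivAt_fderiv_comp_apply (γ := (· • dir θ)) (γ' := fun _ => dir θ)
      (contDiffAt_smul_dir hu hρ θ) (hasDerivAt_smul_dir ρ θ) (hasDerivAt_const ρ (dir θ))

theorem hasDerivAt_angular (hu : ContDiffOn ℝ 2 u (ball 0 R)) (hρ : ρ ∈ ball (0 : ℝ) R) :
    HasDerivAt (fun θ => u (ρ • dir θ)) (angularDeriv u ρ θ) θ :=
  ((contDiffAt_smul_dir hu hρ θ).differentiableAt two_ne_zero).hasFDerivAt.comp_hasDerivAt θ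
    ((hasDerivAt_dir θ).const_smul ρ)

theorem hasDerivAt_angularDeriv (hu : ContDiffOn ℝ 2 u (ball 0 R)) (hρ : ρ ∈ ball (0 : ℝ) R) :
    HasDerivAt (angularDeriv u ρ) (angularDeriv2 u ρ θ) θ := by
  refine (hasDerivAt_fderiv_comp_apply (γ := (ρ • dir ·)) (γ' := (ρ • dirPerp ·))
    (contDiffAt_smul_dir hu hρ θ) ((hasDerivAt_dir θ).const_smul ρ)
    ((hasDerivAt_dirPerp θ).const_smul ρ)).congr_deriv ?_
  simp [angularDeriv2, radialDeriv, sub_eq_add_neg]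

theorem continuousOn_fderiv_fderiv (hu : ContDiffOn ℝ 2 u (ball 0 R)) :
    ContinuousOn (fderiv ℝ (fderiv ℝ u)) (ball 0 R) :=
  (hu.fderiv_of_isOpen isOpen_ball (m := 1) le_rfl).continuousOn_fderiv_of_isOpen isOpen_ball le_rfl

theorem continuousOn_radialDeriv (hu : ContDiffOn ℝ 2 u (ball 0 R)) :
    ContinuousOn (fun p : ℝ × ℝ => radialDeriv u p.1 p.2) (ball 0 R ×ˢ univ) :=
  (continuousOn_comp_smul_dir (hu.continuousOn_fderiv_of_isOpen isOpen_ball one_le_two)).clm_apply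
    (by fun_prop)

theorem continuousOn_radialDeriv2 (hu : ContDiffOn ℝ 2 u (ball 0 R)) :
    ContinuousOn (fun p : ℝ × ℝ => radialDeriv2 u p.1 p.2) (ball 0 R ×ˢ univ) :=
  ((continuousOn_comp_smul_dir (continuousOn_fderiv_fderiv hu)).clm_apply
    (by fun_prop)).clm_apply (by fun_prop)

theorem continuous_angularDeriv2 (hu : ContDiffOn ℝ 2 u (ball 0 R)) (hρ : ρ ∈ ball (0 : ℝ) R) :
    Continuous (angularDeriv2 u ρ) :=
  (((continuous_comp_smul_dir (continuousOn_fderiv_fderiv hu) hρ).clm_apply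
    (by fun_prop)).clm_apply (by fun_prop)).sub
    (continuous_const.mul (continuous_of_continuousOn_prod_univ (continuousOn_radialDeriv hu) hρ))

variable (u) in
def circleIntegralSq (ρ : ℝ) : ℝ := ∫ θ in (0 : ℝ)..2 * π, u (ρ • dir θ) ^ 2 * ρ

variable (u) in
def radialFlux (ρ : ℝ) : ℝ := ∫ θ in (0 : ℝ)..2 * π, ρ * (u (ρ • dir θ) * radialDeriv u ρ θ)

theorem hasDerivAt_circleIntegralSq (hu : ContDiffOn ℝ 2 u (ball 0 R))
    (hρ : ρ ∈ ball (0 : ℝ) R) :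
    HasDerivAt (circleIntegralSq u)
      (2 * radialFlux u ρ + ∫ θ in (0 : ℝ)..2 * π, u (ρ • dir θ) ^ 2) ρ := by
  have hv := continuousOn_comp_smul_dir hu.continuousOn
  have hvr := continuousOn_radialDeriv hu
  have h := hasDerivAt_intervalIntegral_of_continuousOn_s15 (a := 0) (b := 2 * π)
    (F := fun ρ θ => u (ρ • dir θ) ^ 2 * ρ)
    (F' := fun ρ θ => 2 * (ρ * (u (ρ • dir θ) * radialDeriv u ρ θ)) + u (ρ • dir θ) ^ 2)
    isOpen_ball hρ ((hv.fun_pow 2).fun_mul continuousOn_fst)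
    ((continuousOn_const.fun_mul (continuousOn_fst.fun_mul (hv.fun_mul hvr))).fun_add
      (hv.fun_pow 2))
    fun x hx θ => by
      refine (((hasDerivAt_radial (θ := θ) hu hx).fun_pow 2).fun_mul
        (hasDerivAt_id' x)).congr_deriv ?_
      norm_num
      ring
  have hv₀ := continuous_comp_smul_dir hu.continuousOn hρ
  have hvr₀ := continuous_of_continuousOn_prod_univ hvr hρ
  rwa [intervalIntegral.integral_add
    ((continuous_const.fun_mul (continuous_const.fun_mul (hv₀.fun_mul hvr₀))).intervalIntegrable
      _ _)
    ((hv₀.fun_pow 2).intervalIntegrable _ _),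
    intervalIntegral.integral_const_mul] at h

theorem hasDerivAt_radialFlux (hu : ContDiffOn ℝ 2 u (ball 0 R)) (hρ : ρ ∈ ball (0 : ℝ) R) :
    HasDerivAt (radialFlux u) (∫ θ in (0 : ℝ)..2 * π, (u (ρ • dir θ) * radialDeriv u ρ θ
      + ρ * (radialDeriv u ρ θ ^ 2 + u (ρ • dir θ) * radialDeriv2 u ρ θ))) ρ := by
  have hv := continuousOn_comp_smul_dir hu.continuousOn
  have hvr := continuousOn_radialDeriv hu
  refine hasDerivAt_intervalIntegral_of_continuousOn_s15
    (F := fun ρ θ => ρ * (u (ρ • dir θ) * radialDeriv u ρ θ))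
    (F' := fun ρ θ => u (ρ • dir θ) * radialDeriv u ρ θ
      + ρ * (radialDeriv u ρ θ ^ 2 + u (ρ • dir θ) * radialDeriv2 u ρ θ))
    isOpen_ball hρ ?_ ?_ fun x hx θ => ?_
  · exact continuousOn_fst.fun_mul (hv.fun_mul hvr)
  · exact (hv.fun_mul hvr).fun_add (continuousOn_fst.fun_mul
      ((hvr.fun_pow 2).fun_add (hv.fun_mul (continuousOn_radialDeriv2 hu))))
  · exact ((hasDerivAt_id' x).fun_mul ((hasDerivAt_radial hu hx).fun_mul
      (hasDerivAt_radialDeriv hu hx))).congr_deriv (by ring)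

theorem integral_deriv_radialFlux_nonneg (hu : ContDiffOn ℝ 2 u (ball 0 R))
    (harm : ∀ p ∈ ball (0 : ℝ × ℝ) R, laplacian u p = 0) (hρ : 0 < ρ) (hρR : ρ < R) :
    0 ≤ ∫ θ in (0 : ℝ)..2 * π, (u (ρ • dir θ) * radialDeriv u ρ θ
      + ρ * (radialDeriv u ρ θ ^ 2 + u (ρ • dir θ) * radialDeriv2 u ρ θ)) := by
  have hρ' : ρ ∈ ball (0 : ℝ) R := Ico_subset_ball_zero R ⟨hρ.le, hρR⟩
  have hpolar : ∀ θ, u (ρ • dir θ) * radialDeriv u ρ θ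
      + ρ * (radialDeriv u ρ θ ^ 2 + u (ρ • dir θ) * radialDeriv2 u ρ θ)
      = ρ * radialDeriv u ρ θ ^ 2 - ρ⁻¹ * (u (ρ • dir θ) * angularDeriv2 u ρ θ) := fun θ => by
    have h := laplacian_polar (u := u) (ρ := ρ) (θ := θ)
    rw [harm _ (smul_dir_mem_ball hρ' θ), mul_zero] at h
    field_simp
    linear_combination u (ρ • dir θ) * h
  have hparts : ∫ θ in (0 : ℝ)..2 * π, u (ρ • dir θ) * angularDeriv2 u ρ θ
      = -∫ θ in (0 : ℝ)..2 * π, angularDeriv u ρ θ ^ 2 :=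
    integral_mul_second_deriv_eq_neg_integral_deriv_sq
      (fun _ => hasDerivAt_angular hu hρ') (fun _ => hasDerivAt_angularDeriv hu hρ')
      ((continuous_angularDeriv2 hu hρ').intervalIntegrable _ _) (by simp [dir])
      (by simp [angularDeriv, dir, dirPerp])
  have hv := continuous_comp_smul_dir hu.continuousOn hρ'
  have hvr := continuous_of_continuousOn_prod_univ (continuousOn_radialDeriv hu) hρ'
  have hr : 0 ≤ ∫ θ in (0 : ℝ)..2 * π, radialDeriv u ρ θ ^ 2 :=
    intervalIntegral.integral_nonneg (by positivity) fun θ _ => sq_nonneg _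
  have ha : 0 ≤ ∫ θ in (0 : ℝ)..2 * π, angularDeriv u ρ θ ^ 2 :=
    intervalIntegral.integral_nonneg (by positivity) fun θ _ => sq_nonneg _
  calc 0 ≤ ρ * (∫ θ in (0 : ℝ)..2 * π, radialDeriv u ρ θ ^ 2)
        + ρ⁻¹ * ∫ θ in (0 : ℝ)..2 * π, angularDeriv u ρ θ ^ 2 :=
      add_nonneg (mul_nonneg hρ.le hr) (mul_nonneg (inv_nonneg.2 hρ.le) ha)
    _ = ρ * (∫ θ in (0 : ℝ)..2 * π, radialDeriv u ρ θ ^ 2)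
        - ρ⁻¹ * ∫ θ in (0 : ℝ)..2 * π, u (ρ • dir θ) * angularDeriv2 u ρ θ := by
      rw [hparts]; ring
    _ = ∫ θ in (0 : ℝ)..2 * π, (ρ * radialDeriv u ρ θ ^ 2
        - ρ⁻¹ * (u (ρ • dir θ) * angularDeriv2 u ρ θ)) := by
      rw [intervalIntegral.integral_sub
        ((continuous_const.fun_mul (hvr.fun_pow 2)).intervalIntegrable _ _)
        ((continuous_const.fun_mul
          (hv.fun_mul (continuous_angularDeriv2 hu hρ'))).intervalIntegrable _ _),
        intervalIntegral.integral_const_mul, intervalIntegral.integral_const_mul]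
    _ = _ := intervalIntegral.integral_congr fun θ _ => (hpolar θ).symm

theorem radialFlux_nonneg (hu : ContDiffOn ℝ 2 u (ball 0 R))
    (harm : ∀ p ∈ ball (0 : ℝ × ℝ) R, laplacian u p = 0) {r : ℝ} (hr : 0 ≤ r) (hrR : r < R) :
    0 ≤ radialFlux u r := by
  have hball : ∀ ρ ∈ Icc 0 r, ρ ∈ ball (0 : ℝ) R := fun ρ hρ =>
    Ico_subset_ball_zero R ⟨hρ.1, hρ.2.trans_lt hrR⟩
  have hmono : MonotoneOn (radialFlux u) (Icc 0 r) := by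
    refine monotoneOn_of_hasDerivWithinAt_nonneg (convex_Icc 0 r)
      (fun ρ hρ => (hasDerivAt_radialFlux hu (hball ρ hρ)).continuousAt.continuousWithinAt)
      (fun ρ hρ => (hasDerivAt_radialFlux hu (hball ρ (interior_subset hρ))).hasDerivWithinAt)
      fun ρ hρ => ?_
    rw [interior_Icc] at hρ
    exact integral_deriv_radialFlux_nonneg hu harm hρ.1 (hρ.2.trans hrR)
  simpa [radialFlux] using hmono ⟨le_rfl, hr⟩ ⟨hr, le_rfl⟩ hr

end

end PlanePolar

open PlanePolar in
theorem harmonic_disk_q_growth_general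
    (R : ℝ) (u : ℝ × ℝ → ℝ)
    (hu_smooth : ContDiffOn ℝ 2 u (Metric.ball (0 : ℝ × ℝ) R))
    (hu_harm : ∀ p ∈ Metric.ball (0 : ℝ × ℝ) R,
      deriv (fun s => deriv (fun t => u (t, p.2)) s) p.1 +
        deriv (fun s => deriv (fun t => u (p.1, t)) s) p.2 = 0) :
    (∀ r ∈ Set.Ioo (0:ℝ) R,
      deriv (fun ρ => ∫ θ in (0:ℝ)..(2 * Real.pi),
          (u (ρ * Real.cos θ, ρ * Real.sin θ)) ^ 2 * ρ) r ≥
        (∫ θ in (0:ℝ)..(2 * Real.pi),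
          (u (r * Real.cos θ, r * Real.sin θ)) ^ 2 * r) / r) ∧
    MonotoneOn (fun ρ => ∫ θ in (0:ℝ)..(2 * Real.pi),
      (u (ρ * Real.cos θ, ρ * Real.sin θ)) ^ 2 * ρ) (Set.Ioo (0:ℝ) R) := by
  change (∀ r ∈ Ioo 0 R, deriv (circleIntegralSq u) r ≥ circleIntegralSq u r / r)
    ∧ MonotoneOn (circleIntegralSq u) (Ioo 0 R)
  have harm : ∀ p ∈ ball (0 : ℝ × ℝ) R, laplacian u p = 0 := fun p hp =>
    (deriv_deriv_add_deriv_deriv_eq_laplacian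
      (hu_smooth.contDiffAt (isOpen_ball.mem_nhds hp))).symm.trans (hu_harm p hp)
  have hderiv : ∀ r ∈ Ioo 0 R, HasDerivAt (circleIntegralSq u)
      (2 * radialFlux u r + ∫ θ in (0 : ℝ)..2 * π, u (r • dir θ) ^ 2) r := fun r hr =>
    hasDerivAt_circleIntegralSq hu_smooth (Ico_subset_ball_zero R (Ioo_subset_Ico_self hr))
  have hgrowth : ∀ r ∈ Ioo 0 R, circleIntegralSq u r / r
      ≤ 2 * radialFlux u r + ∫ θ in (0 : ℝ)..2 * π, u (r • dir θ) ^ 2 := fun r hr => by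
    rw [circleIntegralSq, intervalIntegral.integral_mul_const, mul_div_cancel_right₀ _ hr.1.ne']
    linarith [radialFlux_nonneg hu_smooth harm hr.1.le hr.2]
  refine ⟨fun r hr => by rw [(hderiv r hr).deriv]; exact hgrowth r hr, ?_⟩
  refine monotoneOn_of_hasDerivWithinAt_nonneg (convex_Ioo 0 R)
    (fun r hr => (hderiv r hr).continuousAt.continuousWithinAt)
    (fun r hr => (hderiv r (interior_subset hr)).hasDerivWithinAt) fun r hr => ?_
  rw [interior_Ioo] at hr
  refine le_trans (div_nonneg ?_ hr.1.le) (hgrowth r hr)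
  exact intervalIntegral.integral_nonneg (by positivity) fun θ _ => mul_nonneg (sq_nonneg _) hr.1.le

theorem harmonic_disk_q_growth
    (R : ℝ) (hR : 0 < R) (u : ℝ × ℝ → ℝ)
    (hu_smooth : ContDiffOn ℝ 2 u (Metric.ball (0 : ℝ × ℝ) R))
    (hu_harm : ∀ p ∈ Metric.ball (0 : ℝ × ℝ) R,
      deriv (fun s => deriv (fun t => u (t, p.2)) s) p.1 +
        deriv (fun s => deriv (fun t => u (p.1, t)) s) p.2 = 0) :
    (∀ r ∈ Set.Ioo (0:ℝ) R,
      deriv (fun ρ => ∫ θ in (0:ℝ)..(2 * Real.pi),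
          (u (ρ * Real.cos θ, ρ * Real.sin θ)) ^ 2 * ρ) r ≥
        (∫ θ in (0:ℝ)..(2 * Real.pi),
          (u (r * Real.cos θ, r * Real.sin θ)) ^ 2 * r) / r) ∧
    MonotoneOn (fun ρ => ∫ θ in (0:ℝ)..(2 * Real.pi),
      (u (ρ * Real.cos θ, ρ * Real.sin θ)) ^ 2 * ρ) (Set.Ioo (0:ℝ) R) :=
  harmonic_disk_q_growth_general R u hu_smooth hu_harm
end
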